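/- arXiv:1603.09138 — 4 statements merged into one kernel-verified Lean document; each statement's English description precedes it below -/
import Mathlib

section
/- (Deterministic oracle inequality.) Let 𝕫 be an n×p1 real matrix, Y = 𝕫β + ε ∈ R^n with supp(β) = S, |S| = s. Let P_e : R^{p1} → [0,∞) be a convex penalty satisfying (A3) relative to S with constants L1 > 1/2 and L2, and let β̂ be any minimizer of θ ↦ (2n)^{−1}‖Y − 𝕫θ‖₂² + λ_n P_e(θ) with λ_n > 0. If 2‖𝕫^T ε / n‖_∞ ≤ λ_n and M(k0, s) > 0 with k0 = (2L2+1)/(2L1−1), then v = β̂ − β satisfies ‖v_{S^c}‖₁ ≤ k0 ‖v_S‖₁ and ‖v‖₁ ≤ λ_n (L1 + L2)² s / ((2L1 − 1) M(k0,s)²). -/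
open MeasureTheory ProbabilityTheory Finset Real Pointwise

noncomputable section

/-- Index type for main effects and two-way interactions: `p1 = p(p+1)/2` coordinates. -/
def InterIdx (p : ℕ) : Type := Fin p ⊕ {e : Fin p × Fin p // e.1 < e.2}

instance (p : ℕ) : Fintype (InterIdx p) := by unfold InterIdx; infer_instance
instance (p : ℕ) : DecidableEq (InterIdx p) := by unfold InterIdx; infer_instance

/-- The interaction vector of a vector `x ∈ ℝ^p`. -/
def interVec {p : ℕ} (x : Fin p → ℝ) : InterIdx p → ℝ :=
  fun j => match j with
  | Sum.inl i => x i
  | Sum.inr e => x e.1.1 * x e.1.2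

/-- Euclidean norm. -/
def l2 {ι : Type*} [Fintype ι] (v : ι → ℝ) : ℝ := Real.sqrt (∑ i, v i ^ 2)

/-- ℓ¹ norm. -/
def l1 {ι : Type*} [Fintype ι] (v : ι → ℝ) : ℝ := ∑ i, |v i|

/-- `restr v J` equals `v` on `J` and vanishes off `J`. -/
def restr {ι : Type*} [Fintype ι] [DecidableEq ι] (v : ι → ℝ) (J : Finset ι) : ι → ℝ :=
  fun i => if i ∈ J then v i else 0

/-- The restricted eigenvalue constant `M(k0, s)`. -/
def REconst {ι : Type*} [Fintype ι] [DecidableEq ι] {n : ℕ}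
    (Z : Matrix (Fin n) ι ℝ) (k0 : ℝ) (s : ℕ) : ℝ :=
  sInf { r : ℝ | ∃ (J : Finset ι) (α : ι → ℝ), J.card ≤ s ∧ restr α J ≠ 0 ∧
    l1 (restr α Jᶜ) ≤ k0 * l1 (restr α J) ∧
    r = l2 (Z.mulVec α) / (Real.sqrt n * l2 (restr α J)) }

/-- `‖ξ‖_{ψ₂} ≤ K` (with all moments finite). -/
def Psi2Bdd {Ω : Type*} [MeasurableSpace Ω] (μ : Measure Ω) (ξ : Ω → ℝ) (K : ℝ) : Prop :=
  ∀ q : ℝ, 1 ≤ q → Integrable (fun ω => |ξ ω| ^ q) μ ∧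
    (∫ ω, |ξ ω| ^ q ∂μ) ^ (1 / q) ≤ Real.sqrt q * K

/-- `‖ξ‖_{ψ₁} ≤ K` (subexponential, with all moments finite). -/
def Psi1Bdd {Ω : Type*} [MeasurableSpace Ω] (μ : Measure Ω) (ξ : Ω → ℝ) (K : ℝ) : Prop :=
  ∀ q : ℝ, 1 ≤ q → Integrable (fun ω => |ξ ω| ^ q) μ ∧
    (∫ ω, |ξ ω| ^ q ∂μ) ^ (1 / q) ≤ q * K

/-- `‖X‖_{ψ₂} ≤ K` for a random vector: every unit linear functional is `ψ₂`-bounded by `K`. -/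
def Psi2BddVec {Ω : Type*} [MeasurableSpace Ω] (μ : Measure Ω) {p : ℕ}
    (X : Ω → Fin p → ℝ) (K : ℝ) : Prop :=
  ∀ u : Fin p → ℝ, l2 u = 1 → Psi2Bdd μ (fun ω => ∑ i, u i * X ω i) K

/-- Centered interaction vector of `X`. -/
def centInter {Ω : Type*} [MeasurableSpace Ω] (μ : Measure Ω) {p : ℕ}
    (X : Ω → Fin p → ℝ) (ω : Ω) (j : InterIdx p) : ℝ :=
  interVec (X ω) j - ∫ ω', interVec (X ω') j ∂μ

/-- The CAP penalty with exponent `q`. -/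
def capPen {p : ℕ} (q : ℝ) (θ : InterIdx p → ℝ) : ℝ :=
  (∑ j : Fin p,
    (|θ (Sum.inl j)| ^ q +
      ∑ e : {e : Fin p × Fin p // e.1 < e.2},
        (if e.1.1 = j ∨ e.1.2 = j then |θ (Sum.inr e)| ^ q else 0)) ^ (1 / q))
  + ∑ e : {e : Fin p × Fin p // e.1 < e.2}, |θ (Sum.inr e)|

/-- The penalty of Bien, Taylor and Tibshirani. -/
def bienPen {p : ℕ} (θ : InterIdx p → ℝ) : ℝ :=
  (∑ j : Fin p,
    max (|θ (Sum.inl j)|)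
      (∑ e : {e : Fin p × Fin p // e.1 < e.2},
        (if e.1.1 = j ∨ e.1.2 = j then |θ (Sum.inr e)| else 0)))
  + ∑ e : {e : Fin p × Fin p // e.1 < e.2}, |θ (Sum.inr e)|

/-- (A1) strong hierarchy for a support set `S`. -/
def StrongHier {p : ℕ} (S : Finset (InterIdx p)) : Prop :=
  ∀ e : {e : Fin p × Fin p // e.1 < e.2}, Sum.inr e ∈ S →
    Sum.inl e.1.1 ∈ S ∧ Sum.inl e.1.2 ∈ S

/-- The symmetric matrix `W(u)` built from the interaction coordinates of `u`. -/
def Wmat {p : ℕ} (u : InterIdx p → ℝ) : Matrix (Fin p) (Fin p) ℝ :=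
  fun i j =>
    if h : i < j then u (Sum.inr ⟨(i, j), h⟩)
    else if h' : j < i then u (Sum.inr ⟨(j, i), h'⟩) else 0

/-- The quadratic part `X^T W(u) X`. -/
def quadW {Ω : Type*} {p : ℕ} (X : Ω → Fin p → ℝ) (u : InterIdx p → ℝ) (ω : Ω) : ℝ :=
  ∑ i, ∑ j, Wmat u i j * X ω i * X ω j

/-- The linear part `X^T u^{(1)}`. -/
def linU {Ω : Type*} {p : ℕ} (X : Ω → Fin p → ℝ) (u : InterIdx p → ℝ) (ω : Ω) : ℝ :=
  ∑ i : Fin p, u (Sum.inl i) * X ω i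

/-- Covariance of two real random variables. -/
def cova {Ω : Type*} [MeasurableSpace Ω] (μ : Measure Ω) (f g : Ω → ℝ) : ℝ :=
  ∫ ω, (f ω - ∫ ω', f ω' ∂μ) * (g ω - ∫ ω', g ω' ∂μ) ∂μ

/-- Smallest eigenvalue of the covariance of the interaction vector of `X`. -/
def lamMinZ {Ω : Type*} [MeasurableSpace Ω] (μ : Measure Ω) {p : ℕ} (X : Ω → Fin p → ℝ) : ℝ :=
  sInf ((fun u : InterIdx p → ℝ =>
    variance (fun ω => ∑ j, u j * interVec (X ω) j) μ) '' {u | l2 u = 1})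

/-- Largest eigenvalue of the covariance of the interaction vector of `X`. -/
def lamMaxZ {Ω : Type*} [MeasurableSpace Ω] (μ : Measure Ω) {p : ℕ} (X : Ω → Fin p → ℝ) : ℝ :=
  sSup ((fun u : InterIdx p → ℝ =>
    variance (fun ω => ∑ j, u j * interVec (X ω) j) μ) '' {u | l2 u = 1})

/-- The measurable-space family for a joint family of vector and scalar random variables. -/
def jointMS {p n : ℕ} :
    ∀ k : Fin n ⊕ Fin n,
      MeasurableSpace (Sum.elim (fun _ : Fin n => Fin p → ℝ) (fun _ : Fin n => ℝ) k) :=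
  fun k => match k with
  | Sum.inl _ => inferInstanceAs (MeasurableSpace (Fin p → ℝ))
  | Sum.inr _ => inferInstanceAs (MeasurableSpace ℝ)

/-- The joint family `(X_1,…,X_n,ε_1,…,ε_n)`. -/
def jointFam {Ω : Type*} {p n : ℕ} (Xs : Fin n → Ω → Fin p → ℝ) (es : Fin n → Ω → ℝ) :
    ∀ k : Fin n ⊕ Fin n,
      Ω → Sum.elim (fun _ : Fin n => Fin p → ℝ) (fun _ : Fin n => ℝ) k :=
  fun k => match k with
  | Sum.inl i => Xs i
  | Sum.inr i => es i


/-! The minimality of `βh` against the competitor `β` gives the basic inequality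
`(2n)⁻¹‖Zv‖² ≤ n⁻¹⟨ε, Zv⟩ + λ (Pe β - Pe βh)` for `v = βh - β`. The noise term is at most
`λ/2 ‖v‖₁` by Hölder, and (A3) together with `supp β ⊆ S` bounds the penalty difference by
`L2 ‖v_S‖₁ - L1 ‖v_Sᶜ‖₁`, so `(2n)⁻¹‖Zv‖² ≤ λ((L2 + 1/2)‖v_S‖₁ - (L1 - 1/2)‖v_Sᶜ‖₁)`.
Nonnegativity of the left side puts `v` in the cone of the restricted eigenvalue condition;
the condition and Cauchy–Schwarz then bound `M² ‖v_S‖₁² / s` by the same right-hand side, and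
maximising the resulting concave quadratic in `‖v_S‖₁` gives the bound on `‖v‖₁`. -/

open Matrix

section

variable {ι : Type*} [Fintype ι]

theorem l2_sq (v : ι → ℝ) : l2 v ^ 2 = ∑ i, v i ^ 2 :=
  Real.sq_sqrt (Finset.sum_nonneg fun i _ => sq_nonneg (v i))

theorem dotProduct_le_mul_l1 {u : ι → ℝ} {c : ℝ} (hu : ∀ j, |u j| ≤ c) (v : ι → ℝ) :
    u ⬝ᵥ v ≤ c * l1 v := by
  rw [l1, Finset.mul_sum]
  refine Finset.sum_le_sum fun j _ => ?_
  calc u j * v j ≤ |u j| * |v j| := by rw [← abs_mul]; exact le_abs_self _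
    _ ≤ c * |v j| := mul_le_mul_of_nonneg_right (hu j) (abs_nonneg _)

theorem inv_mul_dotProduct_mulVec_le {n : ℕ} (Z : Matrix (Fin n) ι ℝ) {ε : Fin n → ℝ} {lam : ℝ}
    (hnoise : ∀ j, 2 * (|∑ i, Z i j * ε i| / n) ≤ lam) (v : ι → ℝ) :
    (n : ℝ)⁻¹ * (ε ⬝ᵥ Z *ᵥ v) ≤ lam / 2 * l1 v := by
  rw [dotProduct_mulVec, ← smul_eq_mul, ← smul_dotProduct]
  refine dotProduct_le_mul_l1 (fun j => ?_) v
  have hj := hnoise j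
  simp only [Pi.smul_apply, vecMul, dotProduct, smul_eq_mul, abs_mul, abs_inv, Nat.abs_cast,
    mul_comm (ε _)]
  rw [inv_mul_eq_div]
  linarith

theorem sum_sq_add_sub_mulVec {n : ℕ} (Z : Matrix (Fin n) ι ℝ) (β βh : ι → ℝ) (ε : Fin n → ℝ) :
    ∑ i, ((Z *ᵥ β) i + ε i - (Z *ᵥ βh) i) ^ 2 =
      ∑ i, ε i ^ 2 - 2 * (ε ⬝ᵥ Z *ᵥ (βh - β)) + ∑ i, (Z *ᵥ (βh - β)) i ^ 2 := by
  simp only [mulVec_sub, dotProduct, Pi.sub_apply, Finset.mul_sum, ← Finset.sum_sub_distrib,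
    ← Finset.sum_add_distrib]
  exact Finset.sum_congr rfl fun i _ => by ring

variable [DecidableEq ι]

theorem l1_restr_add_l1_restr_compl (v : ι → ℝ) (S : Finset ι) :
    l1 (restr v S) + l1 (restr v Sᶜ) = l1 v := by
  simp only [l1, restr, ← Finset.sum_add_distrib, Finset.mem_compl]
  refine Finset.sum_congr rfl fun i _ => ?_
  by_cases h : i ∈ S <;> simp [h]

theorem l1_restr_sub_comm (u v : ι → ℝ) (S : Finset ι) :
    l1 (restr (u - v) S) = l1 (restr (v - u) S) := by
  simp only [l1, restr, Pi.sub_apply, apply_ite abs, abs_sub_comm]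

theorem sq_l1_restr_le_card_mul_sq_l2 (v : ι → ℝ) (S : Finset ι) :
    l1 (restr v S) ^ 2 ≤ #S * l2 (restr v S) ^ 2 := by
  have hl1 : l1 (restr v S) = ∑ i ∈ S, |v i| := by
    simp [l1, restr, apply_ite abs, Finset.sum_ite_mem]
  have hl2 : l2 (restr v S) ^ 2 = ∑ i ∈ S, |v i| ^ 2 := by
    simp [l2_sq, restr, apply_ite (· ^ 2), Finset.sum_ite_mem]
  rw [hl1, hl2]
  exact sq_sum_le_card_mul_sum_sq

theorem restr_compl_sub_of_supported {β : ι → ℝ} {S : Finset ι} (hβ : ∀ j ∉ S, β j = 0)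
    (βh : ι → ℝ) : restr (βh - β) Sᶜ = restr βh Sᶜ := by
  ext i
  by_cases h : i ∈ S <;> simp [restr, h, hβ]

theorem restr_add_restr_sub_of_supported {β : ι → ℝ} {S : Finset ι}
    (hβ : ∀ j ∉ S, β j = 0) (βh : ι → ℝ) : restr βh S + restr (β - βh) S = β := by
  ext i
  by_cases h : i ∈ S <;> simp [restr, h, hβ]

theorem penalty_sub_le {Pe : (ι → ℝ) → ℝ} {S : Finset ι} {L1 L2 : ℝ}
    (hsub : ∀ θ1 θ2, Pe (θ1 + θ2) ≤ Pe θ1 + Pe θ2)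
    (hlow : ∀ θ, Pe (restr θ S) + L1 * l1 (restr θ Sᶜ) ≤ Pe θ)
    (hup : ∀ θ, Pe (restr θ S) ≤ L2 * l1 (restr θ S))
    {β : ι → ℝ} (hβ : ∀ j ∉ S, β j = 0) (βh : ι → ℝ) :
    Pe β - Pe βh ≤ L2 * l1 (restr (βh - β) S) - L1 * l1 (restr (βh - β) Sᶜ) := by
  have hβ_le : Pe β ≤ Pe (restr βh S) + Pe (restr (β - βh) S) := by
    conv_lhs => rw [← restr_add_restr_sub_of_supported hβ βh]
    exact hsub _ _
  rw [restr_compl_sub_of_supported hβ, l1_restr_sub_comm βh β]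
  linarith [hlow βh, hup (β - βh)]

variable {n : ℕ} (Z : Matrix (Fin n) ι ℝ)

theorem half_inv_mul_sum_sq_mulVec_le {β βh : ι → ℝ} {ε : Fin n → ℝ} {S : Finset ι}
    {Pe : (ι → ℝ) → ℝ} {L1 L2 lam : ℝ} (hβ : ∀ j ∉ S, β j = 0)
    (hsub : ∀ θ1 θ2, Pe (θ1 + θ2) ≤ Pe θ1 + Pe θ2)
    (hlow : ∀ θ, Pe (restr θ S) + L1 * l1 (restr θ Sᶜ) ≤ Pe θ)
    (hup : ∀ θ, Pe (restr θ S) ≤ L2 * l1 (restr θ S)) (hlam : 0 ≤ lam)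
    (hmin : (2 * n : ℝ)⁻¹ * (∑ i, ((Z *ᵥ β) i + ε i - (Z *ᵥ βh) i) ^ 2) + lam * Pe βh ≤
      (2 * n : ℝ)⁻¹ * (∑ i, ((Z *ᵥ β) i + ε i - (Z *ᵥ β) i) ^ 2) + lam * Pe β)
    (hnoise : ∀ j, 2 * (|∑ i, Z i j * ε i| / n) ≤ lam) :
    (2 * n : ℝ)⁻¹ * ∑ i, (Z *ᵥ (βh - β)) i ^ 2 ≤
      lam * ((L2 + 1 / 2) * l1 (restr (βh - β) S) - (L1 - 1 / 2) * l1 (restr (βh - β) Sᶜ)) := by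
  have hnull : ∑ i, ((Z *ᵥ β) i + ε i - (Z *ᵥ β) i) ^ 2 = ∑ i, ε i ^ 2 := by simp
  have hexpand : ∀ A E Q : ℝ,
      (2 * n : ℝ)⁻¹ * (A - 2 * E + Q) = (2 * n : ℝ)⁻¹ * A - (n : ℝ)⁻¹ * E + (2 * n : ℝ)⁻¹ * Q :=
    fun A E Q => by ring
  rw [sum_sq_add_sub_mulVec, hnull, hexpand] at hmin
  have hnoise' := inv_mul_dotProduct_mulVec_le Z hnoise (βh - β)
  rw [← l1_restr_add_l1_restr_compl (βh - β) S] at hnoise'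
  have hpen := mul_le_mul_of_nonneg_left (penalty_sub_le hsub hlow hup hβ βh) hlam
  linarith

theorem mul_sq_mul_sq_l1_restr_le {v : ι → ℝ} {S : Finset ι} {M : ℝ}
    (hM : 0 ≤ M) (hRE : M * (√n * l2 (restr v S)) ≤ l2 (Z *ᵥ v)) :
    n * M ^ 2 * l1 (restr v S) ^ 2 ≤ #S * ∑ i, (Z *ᵥ v) i ^ 2 := by
  have hsq : n * M ^ 2 * l2 (restr v S) ^ 2 ≤ ∑ i, (Z *ᵥ v) i ^ 2 := by
    rw [← l2_sq]
    calc n * M ^ 2 * l2 (restr v S) ^ 2 = (M * (√n * l2 (restr v S))) ^ 2 := by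
          rw [mul_pow, mul_pow, Real.sq_sqrt n.cast_nonneg]; ring
      _ ≤ l2 (Z *ᵥ v) ^ 2 :=
        pow_le_pow_left₀ (mul_nonneg hM (mul_nonneg (Real.sqrt_nonneg _) (Real.sqrt_nonneg _)))
          hRE 2
  calc n * M ^ 2 * l1 (restr v S) ^ 2 ≤ n * M ^ 2 * (#S * l2 (restr v S) ^ 2) :=
        mul_le_mul_of_nonneg_left (sq_l1_restr_le_card_mul_sq_l2 v S) (by positivity)
    _ = #S * (n * M ^ 2 * l2 (restr v S) ^ 2) := by ring
    _ ≤ #S * ∑ i, (Z *ᵥ v) i ^ 2 := mul_le_mul_of_nonneg_left hsq (Nat.cast_nonneg _)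

end

theorem add_le_of_sq_le_mul_sub {a b c d s lam M : ℝ} (hlam : 0 < lam) (hM : 0 < M) (hc : 0 < c)
    (hs : 0 ≤ s) (hcone : c * b ≤ d * a) (hquad : M ^ 2 * a ^ 2 ≤ 2 * s * lam * (d * a - c * b)) :
    a + b ≤ lam * (c + d) ^ 2 * s / (2 * c * M ^ 2) := by
  rw [le_div_iff₀ (by positivity)]
  rcases hs.eq_or_lt with rfl | hs
  · have ha2 : a ^ 2 ≤ 0 := le_of_mul_le_mul_left (by simpa using hquad) (pow_pos hM 2)
    obtain rfl : a = 0 := pow_eq_zero_iff two_ne_zero |>.mp (le_antisymm ha2 (sq_nonneg a))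
    nlinarith
  · refine le_of_mul_le_mul_left ?_ (mul_pos hs hlam)
    -- AM–GM: `2 (M² a) (s λ (c + d)) ≤ (M² a)² + (s λ (c + d))²`
    nlinarith [sq_nonneg (M ^ 2 * a - s * lam * (c + d)),
      mul_le_mul_of_nonneg_left hquad (sq_nonneg M)]

theorem statement_8_general {n p1 : ℕ} (hn : 0 < n)
    (Z : Matrix (Fin n) (Fin p1) ℝ)
    (β : Fin p1 → ℝ) (ε : Fin n → ℝ) (S : Finset (Fin p1)) (s : ℕ)
    (hS : ∀ j, j ∈ S ↔ β j ≠ 0) (hs : S.card = s)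
    (Pe : (Fin p1 → ℝ) → ℝ) (L1 L2 : ℝ) (hL1 : 1 / 2 < L1)
    (hPesub : ∀ θ1 θ2, Pe (θ1 + θ2) ≤ Pe θ1 + Pe θ2)
    (hPelow : ∀ θ, Pe (restr θ S) + L1 * l1 (restr θ Sᶜ) ≤ Pe θ)
    (hPeup : ∀ θ, Pe (restr θ S) ≤ L2 * l1 (restr θ S))
    (lam : ℝ) (hlam : 0 < lam)
    (βh : Fin p1 → ℝ)
    (hmin : ∀ θ : Fin p1 → ℝ,
      (2 * n : ℝ)⁻¹ * (∑ i, (Z.mulVec β i + ε i - Z.mulVec βh i) ^ 2) + lam * Pe βh ≤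
        (2 * n : ℝ)⁻¹ * (∑ i, (Z.mulVec β i + ε i - Z.mulVec θ i) ^ 2) + lam * Pe θ)
    (hnoise : ∀ j, 2 * (|∑ i, Z i j * ε i| / n) ≤ lam)
    (k0 : ℝ) (hk0 : k0 = (2 * L2 + 1) / (2 * L1 - 1))
    (M : ℝ) (hM : 0 < M)
    (hRE : ∀ (J : Finset (Fin p1)) (α : Fin p1 → ℝ), J.card ≤ s →
      l1 (restr α Jᶜ) ≤ k0 * l1 (restr α J) →
      M * (Real.sqrt n * l2 (restr α J)) ≤ l2 (Z.mulVec α)) :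
    l1 (restr (βh - β) Sᶜ) ≤ k0 * l1 (restr (βh - β) S) ∧
      l1 (βh - β) ≤ lam * (L1 + L2) ^ 2 * s / ((2 * L1 - 1) * M ^ 2) := by
  set v := βh - β
  have hβ : ∀ j ∉ S, β j = 0 := fun j hj => not_not.mp (mt (hS j).mpr hj)
  have hkey := half_inv_mul_sum_sq_mulVec_le Z hβ hPesub hPelow hPeup hlam.le (hmin β) hnoise
  set Q := ∑ i, (Z *ᵥ v) i ^ 2
  have hQ : 0 ≤ (2 * n : ℝ)⁻¹ * Q := by positivity
  have hcone' : (L1 - 1 / 2) * l1 (restr v Sᶜ) ≤ (L2 + 1 / 2) * l1 (restr v S) :=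
    sub_nonneg.mp (nonneg_of_mul_nonneg_right (hQ.trans hkey) hlam)
  have hcone : l1 (restr v Sᶜ) ≤ k0 * l1 (restr v S) := by
    rw [hk0, div_mul_eq_mul_div, le_div_iff₀ (by linarith)]
    linarith
  refine ⟨hcone, ?_⟩
  have hRE' := mul_sq_mul_sq_l1_restr_le Z hM.le (hRE S v hs.le hcone)
  have hquad : M ^ 2 * l1 (restr v S) ^ 2 ≤
      2 * s * lam * ((L2 + 1 / 2) * l1 (restr v S) - (L1 - 1 / 2) * l1 (restr v Sᶜ)) := by
    have hnR : (0 : ℝ) < n := by exact_mod_cast hn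
    refine le_of_mul_le_mul_left ?_ hnR
    calc n * (M ^ 2 * l1 (restr v S) ^ 2) ≤ s * Q := by rw [← hs, ← mul_assoc]; exact hRE'
      _ = 2 * n * s * ((2 * n : ℝ)⁻¹ * Q) := by field_simp
      _ ≤ 2 * n * s * (lam * ((L2 + 1 / 2) * l1 (restr v S) - (L1 - 1 / 2) * l1 (restr v Sᶜ))) :=
        mul_le_mul_of_nonneg_left hkey (by positivity)
      _ = _ := by ring
  rw [← l1_restr_add_l1_restr_compl v S]
  convert add_le_of_sq_le_mul_sub hlam hM (by linarith) s.cast_nonneg hcone' hquad using 2 <;> ring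

/-- deterministic oracle inequality for a penalized least-squares estimator with
a penalty satisfying (A3). -/
theorem statement_8 {n p1 : ℕ} (hn : 0 < n)
    (Z : Matrix (Fin n) (Fin p1) ℝ)
    (β : Fin p1 → ℝ) (ε : Fin n → ℝ) (S : Finset (Fin p1)) (s : ℕ)
    (hS : ∀ j, j ∈ S ↔ β j ≠ 0) (hs : S.card = s)
    (Pe : (Fin p1 → ℝ) → ℝ) (L1 L2 : ℝ) (hL1 : 1 / 2 < L1)
    (hPenonneg : ∀ θ, 0 ≤ Pe θ)
    (hconv : ConvexOn ℝ Set.univ Pe)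
    (hPe0 : Pe 0 = 0)
    (hPesub : ∀ θ1 θ2, Pe (θ1 + θ2) ≤ Pe θ1 + Pe θ2)
    (hPelow : ∀ θ, Pe (restr θ S) + L1 * l1 (restr θ Sᶜ) ≤ Pe θ)
    (hPeup : ∀ θ, Pe (restr θ S) ≤ L2 * l1 (restr θ S))
    (lam : ℝ) (hlam : 0 < lam)
    (βh : Fin p1 → ℝ)
    (hmin : ∀ θ : Fin p1 → ℝ,
      (2 * n : ℝ)⁻¹ * (∑ i, (Z.mulVec β i + ε i - Z.mulVec βh i) ^ 2) + lam * Pe βh ≤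
        (2 * n : ℝ)⁻¹ * (∑ i, (Z.mulVec β i + ε i - Z.mulVec θ i) ^ 2) + lam * Pe θ)
    (hnoise : ∀ j, 2 * (|∑ i, Z i j * ε i| / n) ≤ lam)
    (k0 : ℝ) (hk0 : k0 = (2 * L2 + 1) / (2 * L1 - 1))
    (M : ℝ) (hM : 0 < M)
    (hRE : ∀ (J : Finset (Fin p1)) (α : Fin p1 → ℝ), J.card ≤ s →
      l1 (restr α Jᶜ) ≤ k0 * l1 (restr α J) →
      M * (Real.sqrt n * l2 (restr α J)) ≤ l2 (Z.mulVec α)) :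
    l1 (restr (βh - β) Sᶜ) ≤ k0 * l1 (restr (βh - β) S) ∧
      l1 (βh - β) ≤ lam * (L1 + L2) ^ 2 * s / ((2 * L1 - 1) * M ^ 2) :=
  statement_8_general hn Z β ε S s hS hs Pe L1 L2 hL1 hPesub hPelow hPeup lam hlam βh hmin hnoise k0
    hk0 M hM hRE
end
end

section
/- Let S ⊆ {1,…,p1} satisfy (A1), and let P_e be the CAP penalty with exponent q > 1. Then for all θ ∈ R^{p1}: P_e(θ) ≥ P_e(θ_S) + ‖θ_{S^c}‖₁, and P_e(θ) ≤ 3‖θ‖₁ (so in particular P_e(θ_S) ≤ 3‖θ_S‖₁); hence P_e satisfies (A3) with L1 = 1 and L2 = 3. -/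
open MeasureTheory ProbabilityTheory Finset Real Pointwise

noncomputable section

/-!
Write `G_j(θ) = |θ_j|^q + Σ_{e ∋ j} |θ_e|^q`, so that `P_e(θ) = Σ_j G_j(θ)^{1/q} + Σ_e |θ_e|`.
Upper bound: `G_j(θ)^{1/q} ≤ |θ_j| + Σ_{e ∋ j} |θ_e|` because `‖·‖_q ≤ ‖·‖_1`, and every
interaction `e` lies in exactly two groups, so `P_e(θ) ≤ Σ_j |θ_j| + 3 Σ_e |θ_e| ≤ 3‖θ‖₁`.
Lower bound: by strong hierarchy, if `j ∉ S` then no coordinate of the group `j` lies in `S`, so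
`G_j(θ_S) = 0`, while `G_j(θ)^{1/q} ≥ |θ_j|`; if `j ∈ S` then `G_j(θ_S) ≤ G_j(θ)`. Summing over `j`
and splitting `|θ_e| = |(θ_S)_e| + |(θ_{S^c})_e|` for the interactions gives
`P_e(θ_S) + ‖θ_{S^c}‖₁ ≤ P_e(θ)`.
-/

theorem Finset.sum_rpow_le_rpow_sum {ι : Type*} (s : Finset ι) {f : ι → ℝ}
    (hf : ∀ i ∈ s, 0 ≤ f i) {q : ℝ} (hq : 1 ≤ q) :
    ∑ i ∈ s, f i ^ q ≤ (∑ i ∈ s, f i) ^ q := by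
  classical
  induction s using Finset.induction_on with
  | empty => simp [Real.zero_rpow (by positivity : q ≠ 0)]
  | insert a s ha ih =>
    simp only [mem_insert, forall_eq_or_imp] at hf
    rw [sum_insert ha, sum_insert ha]
    calc f a ^ q + ∑ i ∈ s, f i ^ q ≤ f a ^ q + (∑ i ∈ s, f i) ^ q := by gcongr; exact ih hf.2
      _ ≤ (f a + ∑ i ∈ s, f i) ^ q :=
        Real.add_rpow_le_rpow_add hf.1 (sum_nonneg hf.2) hq

section Restrict

variable {ι : Type*} [Fintype ι] [DecidableEq ι]

theorem abs_restr_add_abs_restr_compl (v : ι → ℝ) (J : Finset ι) (i : ι) :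
    |restr v J i| + |restr v Jᶜ i| = |v i| := by
  by_cases hi : i ∈ J <;> simp [restr, hi]

theorem abs_restr_le (v : ι → ℝ) (J : Finset ι) (i : ι) : |restr v J i| ≤ |v i| := by
  unfold restr; split_ifs <;> simp

end Restrict

abbrev InterPair (p : ℕ) : Type := {e : Fin p × Fin p // e.1 < e.2}

variable {p : ℕ}

theorem l1_interIdx (θ : InterIdx p → ℝ) :
    l1 θ = ∑ j, |θ (Sum.inl j)| + ∑ e : InterPair p, |θ (Sum.inr e)| :=
  Fintype.sum_sum_type _

/-- `capGroup q θ j = ‖(θ_j, θ_{jk} : j < k, θ_{kj} : k < j)‖_q ^ q`. -/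
def capGroup (q : ℝ) (θ : InterIdx p → ℝ) (j : Fin p) : ℝ :=
  |θ (Sum.inl j)| ^ q +
    ∑ e : InterPair p, if e.1.1 = j ∨ e.1.2 = j then |θ (Sum.inr e)| ^ q else 0

theorem capPen_eq (q : ℝ) (θ : InterIdx p → ℝ) :
    capPen q θ = ∑ j, capGroup q θ j ^ (1 / q) + ∑ e : InterPair p, |θ (Sum.inr e)| := rfl

theorem capGroup_nonneg (q : ℝ) (θ : InterIdx p → ℝ) (j : Fin p) : 0 ≤ capGroup q θ j := by
  unfold capGroup
  refine add_nonneg (by positivity) (sum_nonneg fun e _ => ?_)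
  split_ifs <;> positivity

theorem capGroup_mono {q : ℝ} (hq : 0 < q) {v w : InterIdx p → ℝ} (h : ∀ i, |v i| ≤ |w i|)
    (j : Fin p) : capGroup q v j ≤ capGroup q w j := by
  have hpow : ∀ i, |v i| ^ q ≤ |w i| ^ q := fun i =>
    Real.rpow_le_rpow (abs_nonneg _) (h i) hq.le
  refine add_le_add (hpow _) (sum_le_sum fun e _ => ?_)
  split_ifs
  exacts [hpow _, le_rfl]

theorem abs_le_capGroup_rpow {q : ℝ} (hq : 0 < q) (θ : InterIdx p → ℝ) (j : Fin p) :
    |θ (Sum.inl j)| ≤ capGroup q θ j ^ (1 / q) := by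
  calc |θ (Sum.inl j)| = (|θ (Sum.inl j)| ^ q) ^ (1 / q) := by
        rw [← Real.rpow_mul (abs_nonneg _), mul_one_div_cancel hq.ne', Real.rpow_one]
    _ ≤ capGroup q θ j ^ (1 / q) := by
        gcongr
        exact le_add_of_nonneg_right (sum_nonneg fun e _ => by split_ifs <;> positivity)

theorem capGroup_rpow_le {q : ℝ} (hq : 1 ≤ q) (θ : InterIdx p → ℝ) (j : Fin p) :
    capGroup q θ j ^ (1 / q) ≤
      |θ (Sum.inl j)| +
        ∑ e : InterPair p, if e.1.1 = j ∨ e.1.2 = j then |θ (Sum.inr e)| else 0 := by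
  set b : InterPair p → ℝ := fun e => if e.1.1 = j ∨ e.1.2 = j then |θ (Sum.inr e)| else 0
  have hb : ∀ e, 0 ≤ b e := fun e => by simp only [b]; split_ifs <;> positivity
  have hgroup : capGroup q θ j = |θ (Sum.inl j)| ^ q + ∑ e, b e ^ q := by
    simp only [capGroup, b, apply_ite (· ^ q), Real.zero_rpow (by positivity : q ≠ 0)]
  calc capGroup q θ j ^ (1 / q) ≤ (|θ (Sum.inl j)| ^ q + (∑ e, b e) ^ q) ^ (1 / q) := by
        rw [hgroup]
        gcongr
        exact sum_rpow_le_rpow_sum _ (fun e _ => hb e) hq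
    _ ≤ |θ (Sum.inl j)| + ∑ e, b e :=
        Real.rpow_add_rpow_le_add (abs_nonneg _) (sum_nonneg fun e _ => hb e) hq

theorem sum_sum_ite_incident (c : InterPair p → ℝ) :
    ∑ j : Fin p, ∑ e : InterPair p, (if e.1.1 = j ∨ e.1.2 = j then c e else 0) =
      2 * ∑ e, c e := by
  rw [sum_comm, mul_sum]
  refine sum_congr rfl fun e _ => ?_
  have hpair : univ.filter (fun j => e.1.1 = j ∨ e.1.2 = j) = {e.1.1, e.1.2} := by
    ext; simp [eq_comm]
  rw [← sum_filter, sum_const, hpair, card_pair e.2.ne, nsmul_eq_mul]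
  norm_num

theorem capPen_le_three_mul_l1 {q : ℝ} (hq : 1 ≤ q) (θ : InterIdx p → ℝ) :
    capPen q θ ≤ 3 * l1 θ := by
  have hgroups : ∑ j, capGroup q θ j ^ (1 / q) ≤
      ∑ j, |θ (Sum.inl j)| + 2 * ∑ e : InterPair p, |θ (Sum.inr e)| := by
    rw [← sum_sum_ite_incident, ← sum_add_distrib]
    exact sum_le_sum fun j _ => capGroup_rpow_le hq θ j
  have hmain : 0 ≤ ∑ j, |θ (Sum.inl j)| := sum_nonneg fun j _ => abs_nonneg _
  rw [capPen_eq, l1_interIdx]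
  linarith

theorem capGroup_restr_eq_zero {q : ℝ} (hq : q ≠ 0) {S : Finset (InterIdx p)}
    (hS : StrongHier S) (θ : InterIdx p → ℝ) {j : Fin p} (hj : Sum.inl j ∉ S) :
    capGroup q (restr θ S) j = 0 := by
  have hgroup : ∀ e : InterPair p, e.1.1 = j ∨ e.1.2 = j → Sum.inr e ∉ S := by
    rintro e (rfl | rfl) he
    exacts [hj (hS e he).1, hj (hS e he).2]
  unfold capGroup
  rw [show restr θ S (Sum.inl j) = 0 from if_neg hj, abs_zero, Real.zero_rpow hq, zero_add]
  refine sum_eq_zero fun e _ => ?_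
  split_ifs with he
  · rw [show restr θ S (Sum.inr e) = 0 from if_neg (hgroup e he), abs_zero, Real.zero_rpow hq]
  · rfl

theorem capGroup_restr_rpow_add_le {q : ℝ} (hq : 0 < q) {S : Finset (InterIdx p)}
    (hS : StrongHier S) (θ : InterIdx p → ℝ) (j : Fin p) :
    capGroup q (restr θ S) j ^ (1 / q) + |restr θ Sᶜ (Sum.inl j)| ≤
      capGroup q θ j ^ (1 / q) := by
  by_cases hj : Sum.inl j ∈ S
  · have hcompl : restr θ Sᶜ (Sum.inl j) = 0 :=
      if_neg fun h => mem_compl.1 h hj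
    rw [hcompl, abs_zero, add_zero]
    gcongr
    · exact capGroup_nonneg q _ j
    · exact capGroup_mono hq (abs_restr_le θ S) j
  · have hcompl : restr θ Sᶜ (Sum.inl j) = θ (Sum.inl j) :=
      if_pos (mem_compl.2 hj)
    rw [capGroup_restr_eq_zero hq.ne' hS θ hj, hcompl, Real.zero_rpow (by positivity), zero_add]
    exact abs_le_capGroup_rpow hq θ j

theorem capPen_restr_add_l1_restr_compl_le {q : ℝ} (hq : 0 < q) {S : Finset (InterIdx p)}
    (hS : StrongHier S) (θ : InterIdx p → ℝ) :
    capPen q (restr θ S) + l1 (restr θ Sᶜ) ≤ capPen q θ := by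
  have hgroups : ∑ j, capGroup q (restr θ S) j ^ (1 / q) + ∑ j, |restr θ Sᶜ (Sum.inl j)| ≤
      ∑ j, capGroup q θ j ^ (1 / q) := by
    rw [← sum_add_distrib]
    exact sum_le_sum fun j _ => capGroup_restr_rpow_add_le hq hS θ j
  have hpairs : ∑ e : InterPair p, |restr θ S (Sum.inr e)| +
      ∑ e : InterPair p, |restr θ Sᶜ (Sum.inr e)| = ∑ e : InterPair p, |θ (Sum.inr e)| := by
    rw [← sum_add_distrib]
    exact sum_congr rfl fun e _ => abs_restr_add_abs_restr_compl θ S _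
  rw [capPen_eq, capPen_eq, l1_interIdx]
  linarith

/-- under strong hierarchy (A1), the CAP penalty satisfies (A3) with
`L1 = 1` and `L2 = 3`. -/
theorem statement_9 {p : ℕ} (q : ℝ) (hq : 1 < q)
    (S : Finset (InterIdx p)) (hA1 : StrongHier S) :
    ∀ θ : InterIdx p → ℝ,
      capPen q (restr θ S) + l1 (restr θ Sᶜ) ≤ capPen q θ ∧
        capPen q θ ≤ 3 * l1 θ ∧
        capPen q (restr θ S) ≤ 3 * l1 (restr θ S) := fun θ =>
  ⟨capPen_restr_add_l1_restr_compl_le (by linarith) hA1 θ,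
    capPen_le_three_mul_l1 hq.le θ, capPen_le_three_mul_l1 hq.le (restr θ S)⟩

end
end

section
/- For q > 1 define, for each j ∈ {1,…,p}, H̃_j = (θ_{kj} : k < j) and G̃_j = (θ_j, H̃_j), and let P_e(θ) = Σ_{j=1}^p ( ‖G̃_j‖_q + ‖H̃_j‖₁ ). Then for any S ⊆ {1,…,p1} satisfying (A1), P_e satisfies (A3) with L1 = 1 and L2 = 2: P_e(0)=0, P_e is subadditive, P_e(θ) ≥ P_e(θ_S) + ‖θ_{S^c}‖₁ for all θ, and P_e(θ_S) ≤ 2‖θ_S‖₁ for all θ. -/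
open MeasureTheory ProbabilityTheory Finset Real Pointwise

noncomputable section

/-- The nested penalty of Example 3. -/
def exPen2 {p : ℕ} (q : ℝ) (θ : InterIdx p → ℝ) : ℝ :=
  ∑ j : Fin p,
    ((|θ (Sum.inl j)| ^ q +
        ∑ e : {e : Fin p × Fin p // e.1 < e.2},
          (if e.1.2 = j then |θ (Sum.inr e)| ^ q else 0)) ^ (1 / q) +
      ∑ e : {e : Fin p × Fin p // e.1 < e.2},
        (if e.1.2 = j then |θ (Sum.inr e)| else 0))

/-! Write `exPen2 q θ = ∑ⱼ (‖θ on G̃ⱼ‖_q + ‖θ on H̃ⱼ‖₁)`, where the groups `G̃ⱼ = {j} ∪ H̃ⱼ`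
partition the index set. Subadditivity is Minkowski's inequality groupwise, and `‖·‖_q ≤ ‖·‖₁`
gives `L2 = 2`. For the lower bound, strong hierarchy leaves two cases for each group: either its
main effect lies in `S`, and then only the `ℓ¹` part of the group is shared between `S` and `Sᶜ`;
or the whole group lies in `Sᶜ`, and then `|θⱼ|` is bounded by the `ℓ^q` norm of the group. -/

namespace Finset

variable {ι : Type*} (s : Finset ι) {q : ℝ}

def lpNormOn (q : ℝ) (f : ι → ℝ) : ℝ := (∑ i ∈ s, |f i| ^ q) ^ (1 / q)

theorem lpNormOn_eq_zero (hq : q ≠ 0) {f : ι → ℝ} (hf : ∀ i ∈ s, f i = 0) :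
    s.lpNormOn q f = 0 := by
  rw [lpNormOn, sum_eq_zero fun i hi => by rw [hf i hi, abs_zero, zero_rpow hq],
    zero_rpow (one_div_ne_zero hq)]

theorem lpNormOn_add_le (hq : 1 ≤ q) (f g : ι → ℝ) :
    s.lpNormOn q (f + g) ≤ s.lpNormOn q f + s.lpNormOn q g :=
  Real.Lp_add_le s f g hq

theorem lpNormOn_mono (hq : 0 < q) {f g : ι → ℝ} (hfg : ∀ i ∈ s, |f i| ≤ |g i|) :
    s.lpNormOn q f ≤ s.lpNormOn q g := by
  refine rpow_le_rpow (sum_nonneg fun _ _ => rpow_nonneg (abs_nonneg _) _)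
    (sum_le_sum fun i hi => ?_) (by positivity)
  exact rpow_le_rpow (abs_nonneg _) (hfg i hi) hq.le

theorem abs_le_lpNormOn (hq : 0 < q) (f : ι → ℝ) {i : ι} (hi : i ∈ s) :
    |f i| ≤ s.lpNormOn q f := by
  calc |f i| = (|f i| ^ q) ^ (1 / q) := by rw [one_div, rpow_rpow_inv (abs_nonneg _) hq.ne']
    _ ≤ s.lpNormOn q f :=
      rpow_le_rpow (rpow_nonneg (abs_nonneg _) _)
        (single_le_sum (fun _ _ => rpow_nonneg (abs_nonneg _) _) hi) (by positivity)

theorem sum_abs_rpow_le_rpow_sum_abs (hq : 1 ≤ q) (f : ι → ℝ) :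
    ∑ i ∈ s, |f i| ^ q ≤ (∑ i ∈ s, |f i|) ^ q := by
  classical
  induction s using Finset.induction_on with
  | empty => simp [rpow_nonneg]
  | insert a s ha ih =>
    rw [sum_insert ha, sum_insert ha]
    exact (add_le_add_right ih _).trans
      (add_rpow_le_rpow_add (abs_nonneg _) (sum_nonneg fun _ _ => abs_nonneg _) hq)

theorem lpNormOn_le_sum_abs (hq : 1 ≤ q) (f : ι → ℝ) :
    s.lpNormOn q f ≤ ∑ i ∈ s, |f i| := by
  have hsum : 0 ≤ ∑ i ∈ s, |f i| := sum_nonneg fun _ _ => abs_nonneg _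
  calc s.lpNormOn q f ≤ ((∑ i ∈ s, |f i|) ^ q) ^ (1 / q) :=
        rpow_le_rpow (sum_nonneg fun _ _ => rpow_nonneg (abs_nonneg _) _)
          (sum_abs_rpow_le_rpow_sum_abs s hq f) (by positivity)
    _ = ∑ i ∈ s, |f i| := by rw [one_div, rpow_rpow_inv hsum (by positivity)]

end Finset

section Restriction

variable {ι : Type*} [Fintype ι] [DecidableEq ι]

theorem restr_apply_of_mem (v : ι → ℝ) {J : Finset ι} {i : ι} (hi : i ∈ J) :
    restr v J i = v i := if_pos hi

theorem restr_apply_of_notMem (v : ι → ℝ) {J : Finset ι} {i : ι} (hi : i ∉ J) :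
    restr v J i = 0 := if_neg hi

end Restriction

namespace InterIdx

variable {p : ℕ}

/-- The interactions `(k, j)`, `k < j`: the index set of `H̃_j`. -/
def interOf (j : Fin p) : Finset (InterIdx p) :=
  (univ.filter fun e : {e : Fin p × Fin p // e.1 < e.2} => e.1.2 = j).map
    (⟨Sum.inr, Sum.inr_injective⟩ : _ ↪ InterIdx p)

/-- The index set of `G̃_j`. -/
def groupOf (j : Fin p) : Finset (InterIdx p) := insert (Sum.inl j : InterIdx p) (interOf j)

theorem sum_interOf {M : Type*} [AddCommMonoid M] (g : InterIdx p → M) (j : Fin p) :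
    ∑ i ∈ interOf j, g i = ∑ e : {e : Fin p × Fin p // e.1 < e.2},
      if e.1.2 = j then g (Sum.inr e) else 0 := by
  rw [interOf, sum_map, sum_filter]
  rfl

theorem sum_groupOf {M : Type*} [AddCommMonoid M] (g : InterIdx p → M) (j : Fin p) :
    ∑ i ∈ groupOf j, g i = g (Sum.inl j) + ∑ i ∈ interOf j, g i :=
  sum_insert fun h => by
    obtain ⟨e, -, he⟩ := mem_map.1 h
    exact Sum.inr_ne_inl he

theorem inl_mem_groupOf (j : Fin p) : (Sum.inl j : InterIdx p) ∈ groupOf j := mem_insert_self _ _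

theorem l1_eq_sum_groupOf (v : InterIdx p → ℝ) :
    l1 v = ∑ j, (|v (Sum.inl j)| + ∑ i ∈ interOf j, |v i|) := by
  rw [l1, show ∑ i : InterIdx p, |v i| = _ from Fintype.sum_sum_type _, sum_add_distrib]
  simp only [sum_interOf]
  rw [sum_comm (f := fun j e => if e.1.2 = j then |v (Sum.inr e)| else 0)]
  simp

theorem restr_eq_zero_of_mem_groupOf {S : Finset (InterIdx p)} (hS : StrongHier S) {j : Fin p}
    (hj : (Sum.inl j : InterIdx p) ∉ S) (θ : InterIdx p → ℝ) {i : InterIdx p}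
    (hi : i ∈ groupOf j) :
    restr θ S i = 0 := by
  refine restr_apply_of_notMem θ fun hiS => ?_
  rcases mem_insert.1 hi with rfl | hi
  · exact hj hiS
  · obtain ⟨e, he, rfl⟩ := mem_map.1 hi
    exact hj ((mem_filter.1 he).2 ▸ (hS e hiS).2)

end InterIdx

open InterIdx

theorem exPen2_eq (q : ℝ) {p : ℕ} (θ : InterIdx p → ℝ) :
    exPen2 q θ = ∑ j, ((groupOf j).lpNormOn q θ + ∑ i ∈ interOf j, |θ i|) := by
  simp only [lpNormOn, sum_groupOf, sum_interOf]
  rfl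

theorem exPen2_zero {q : ℝ} (hq : q ≠ 0) {p : ℕ} : exPen2 q (0 : InterIdx p → ℝ) = 0 := by
  simp [exPen2_eq, lpNormOn_eq_zero _ hq]

theorem exPen2_add_le {q : ℝ} (hq : 1 ≤ q) {p : ℕ} (θ₁ θ₂ : InterIdx p → ℝ) :
    exPen2 q (θ₁ + θ₂) ≤ exPen2 q θ₁ + exPen2 q θ₂ := by
  simp only [exPen2_eq, ← sum_add_distrib]
  refine sum_le_sum fun j _ => ?_
  have hinter : ∑ i ∈ interOf j, |(θ₁ + θ₂) i|
      ≤ ∑ i ∈ interOf j, |θ₁ i| + ∑ i ∈ interOf j, |θ₂ i| := by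
    rw [← sum_add_distrib]; exact sum_le_sum fun i _ => abs_add_le _ _
  linarith [lpNormOn_add_le (groupOf j) hq θ₁ θ₂]

theorem lpNormOn_groupOf_restr_add_abs_le {q : ℝ} (hq : 0 < q) {p : ℕ}
    {S : Finset (InterIdx p)} (hS : StrongHier S) (θ : InterIdx p → ℝ) (j : Fin p) :
    (groupOf j).lpNormOn q (restr θ S) + |restr θ Sᶜ (Sum.inl j)|
      ≤ (groupOf j).lpNormOn q θ := by
  by_cases hj : (Sum.inl j : InterIdx p) ∈ S
  · rw [restr_apply_of_notMem θ (notMem_compl.2 hj), abs_zero, add_zero]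
    exact lpNormOn_mono _ hq fun i _ => abs_restr_le θ S i
  · rw [lpNormOn_eq_zero _ hq.ne' fun i hi => restr_eq_zero_of_mem_groupOf hS hj θ hi,
      restr_apply_of_mem θ (mem_compl.2 hj), zero_add]
    exact abs_le_lpNormOn _ hq θ (inl_mem_groupOf j)

theorem exPen2_restr_add_l1_restr_compl_le {q : ℝ} (hq : 0 < q) {p : ℕ}
    {S : Finset (InterIdx p)} (hS : StrongHier S) (θ : InterIdx p → ℝ) :
    exPen2 q (restr θ S) + l1 (restr θ Sᶜ) ≤ exPen2 q θ := by
  simp only [exPen2_eq, l1_eq_sum_groupOf, ← sum_add_distrib]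
  refine sum_le_sum fun j _ => ?_
  have hinter : ∑ i ∈ interOf j, |restr θ S i| + ∑ i ∈ interOf j, |restr θ Sᶜ i|
      = ∑ i ∈ interOf j, |θ i| := by
    rw [← sum_add_distrib]; exact sum_congr rfl fun i _ => abs_restr_add_abs_restr_compl θ S i
  linarith [lpNormOn_groupOf_restr_add_abs_le hq hS θ j]

theorem exPen2_le_two_mul_l1 {q : ℝ} (hq : 1 ≤ q) {p : ℕ} (θ : InterIdx p → ℝ) :
    exPen2 q θ ≤ 2 * l1 θ := by
  rw [exPen2_eq, l1_eq_sum_groupOf, mul_sum]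
  refine sum_le_sum fun j _ => ?_
  have hgroup := lpNormOn_le_sum_abs (groupOf j) hq θ
  rw [sum_groupOf] at hgroup
  linarith [abs_nonneg (θ (Sum.inl j))]

/-- Example 3: the nested penalty `exPen2` satisfies (A3) with `L1 = 1` and
`L2 = 2` for any strongly hierarchical support `S`. -/
theorem statement_12 {p : ℕ} (q : ℝ) (hq : 1 < q)
    (S : Finset (InterIdx p)) (hA1 : StrongHier S) :
    exPen2 q (0 : InterIdx p → ℝ) = 0 ∧
      (∀ θ1 θ2 : InterIdx p → ℝ, exPen2 q (θ1 + θ2) ≤ exPen2 q θ1 + exPen2 q θ2) ∧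
      (∀ θ : InterIdx p → ℝ, exPen2 q (restr θ S) + l1 (restr θ Sᶜ) ≤ exPen2 q θ) ∧
      (∀ θ : InterIdx p → ℝ, exPen2 q (restr θ S) ≤ 2 * l1 (restr θ S)) :=
  ⟨exPen2_zero (by positivity), exPen2_add_le hq.le,
    exPen2_restr_add_l1_restr_compl_le (by positivity) hA1,
    fun θ => exPen2_le_two_mul_l1 hq.le (restr θ S)⟩

end
end

section
/- Let X be a centered random vector in R^p with interaction vector Z, and suppose λ_max(Σ_z) < ∞ and (A4) holds: sup_{u ∈ S^{p1−1}} |ρ_u| ≤ ρ̄ < 1, where ρ_u = corr(X^T u^{(1)}, X^T W(u) X) when both variances are positive and ρ_u = 0 otherwise. Then sup_{u ∈ S^{p1−1}} Var( (1/2) X^T W(u) X ) ≤ λ_max(Σ_z)/(1 − ρ̄). -/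
open MeasureTheory ProbabilityTheory Finset Real Pointwise

noncomputable section

/-! The interaction form splits as `Z^T u = X^T u⁽¹⁾ + ½ X^T W(u) X`. Expanding the variance of
this sum, (A4) and `2√(ab) ≤ a + b` bound the cross term by `ρ̄` times the sum of the two
variances, so `(1 - ρ̄) Var(½ X^T W(u) X) ≤ Var(Z^T u) ≤ λ_max(Σ_z)` for every unit `u`. -/

section InteractionAlgebra

variable {p : ℕ}

lemma Wmat_comm (u : InterIdx p → ℝ) (i j : Fin p) : Wmat u i j = Wmat u j i := by
  rcases lt_trichotomy i j with h | rfl | h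
  · simp [Wmat, h, h.not_gt]
  · rfl
  · simp [Wmat, h, h.not_gt]

lemma sum_Wmat_upper_mul_mul (u : InterIdx p → ℝ) (x : Fin p → ℝ) :
    ∑ i, ∑ j, (if i < j then Wmat u i j else 0) * x i * x j
      = ∑ e : {e : Fin p × Fin p // e.1 < e.2}, u (Sum.inr e) * (x e.1.1 * x e.1.2) := by
  calc ∑ i, ∑ j, (if i < j then Wmat u i j else 0) * x i * x j
      = ∑ z : Fin p × Fin p, if z.1 < z.2 then Wmat u z.1 z.2 * x z.1 * x z.2 else 0 := by
        rw [← Fintype.sum_prod_type']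
        simp only [ite_mul, zero_mul]
    _ = ∑ z ∈ univ.filter (fun z : Fin p × Fin p => z.1 < z.2), Wmat u z.1 z.2 * x z.1 * x z.2 :=
        (Finset.sum_filter _ _).symm
    _ = ∑ e : {e : Fin p × Fin p // e.1 < e.2}, Wmat u e.1.1 e.1.2 * x e.1.1 * x e.1.2 :=
        Finset.sum_subtype _ (by simp) (fun z : Fin p × Fin p => Wmat u z.1 z.2 * x z.1 * x z.2)
    _ = _ := Finset.sum_congr rfl fun e _ => by simp [Wmat, e.2, mul_assoc]

lemma sum_Wmat_mul_mul (u : InterIdx p → ℝ) (x : Fin p → ℝ) :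
    ∑ i, ∑ j, Wmat u i j * x i * x j
      = 2 * ∑ e : {e : Fin p × Fin p // e.1 < e.2}, u (Sum.inr e) * (x e.1.1 * x e.1.2) := by
  set U : Fin p → Fin p → ℝ := fun i j => (if i < j then Wmat u i j else 0) * x i * x j
  have split : ∀ i j, Wmat u i j * x i * x j = U i j + U j i := fun i j => by
    rcases lt_trichotomy i j with h | rfl | h
    · simp [U, h, h.not_gt]
    · simp [U, Wmat]
    · simp [U, h, h.not_gt, Wmat_comm u i j]; ring
  simp only [split, Finset.sum_add_distrib]
  rw [Finset.sum_comm (f := fun i j => U j i), ← two_mul, sum_Wmat_upper_mul_mul]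

lemma sum_mul_interVec (u : InterIdx p → ℝ) (x : Fin p → ℝ) :
    ∑ j, u j * interVec x j
      = ∑ i, u (Sum.inl i) * x i + 2⁻¹ * ∑ i, ∑ j, Wmat u i j * x i * x j := by
  rw [sum_Wmat_mul_mul, inv_mul_cancel_left₀ two_ne_zero]
  exact Fintype.sum_sum_type _

lemma sum_mul_interVec_eq_linU_add_quadW {Ω : Type*} (X : Ω → Fin p → ℝ) (u : InterIdx p → ℝ) :
    (fun ω => ∑ j, u j * interVec (X ω) j) = linU X u + fun ω => 2⁻¹ * quadW X u ω :=
  funext fun ω => sum_mul_interVec u (X ω)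

end InteractionAlgebra

section CorrelationBound

variable {Ω : Type*} [MeasurableSpace Ω] {μ : Measure Ω} {f g : Ω → ℝ} {ρ : ℝ}

lemma abs_covariance_const_mul_right_le
    (h : |cov[f, g; μ]| ≤ ρ * √Var[f; μ] * √Var[g; μ]) (c : ℝ) :
    |cov[f, fun ω => c * g ω; μ]| ≤ ρ * √Var[f; μ] * √Var[fun ω => c * g ω; μ] := by
  rw [covariance_const_mul_right, variance_const_mul, Real.sqrt_mul (sq_nonneg c),
    Real.sqrt_sq_eq_abs, abs_mul]
  calc |c| * |cov[f, g; μ]| ≤ |c| * (ρ * √Var[f; μ] * √Var[g; μ]) :=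
        mul_le_mul_of_nonneg_left h (abs_nonneg c)
    _ = _ := by ring

lemma one_sub_mul_add_le_variance_add [IsFiniteMeasure μ] (hf : MemLp f 2 μ) (hg : MemLp g 2 μ)
    (hρ : 0 ≤ ρ) (h : |cov[f, g; μ]| ≤ ρ * √Var[f; μ] * √Var[g; μ]) :
    (1 - ρ) * (Var[f; μ] + Var[g; μ]) ≤ Var[f + g; μ] := by
  have amgm : 2 * (√Var[f; μ] * √Var[g; μ]) ≤ Var[f; μ] + Var[g; μ] := by
    nlinarith [sq_nonneg (√Var[f; μ] - √Var[g; μ]), Real.sq_sqrt (variance_nonneg f μ),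
      Real.sq_sqrt (variance_nonneg g μ)]
  have hcov : -(ρ * (Var[f; μ] + Var[g; μ])) ≤ 2 * cov[f, g; μ] := by
    nlinarith [mul_le_mul_of_nonneg_left amgm hρ, neg_abs_le cov[f, g; μ]]
  rw [variance_add hf hg]
  linarith

end CorrelationBound

theorem statement_14_general {Ω : Type*} [MeasureSpace Ω] [IsProbabilityMeasure (ℙ : Measure Ω)]
    {p : ℕ} (X : Ω → Fin p → ℝ)
    (hL2 : ∀ j : InterIdx p, MemLp (fun ω => interVec (X ω) j) 2 ℙ)
    (hbdd : BddAbove ((fun u : InterIdx p → ℝ =>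
      variance (fun ω => ∑ j, u j * interVec (X ω) j) ℙ) '' {u | l2 u = 1}))
    (ρ : ℝ) (hρ0 : 0 ≤ ρ) (hρ : ρ < 1)
    (hA4 : ∀ u : InterIdx p → ℝ, l2 u = 1 →
      |cova ℙ (linU X u) (quadW X u)| ≤
        ρ * Real.sqrt (variance (linU X u) ℙ) * Real.sqrt (variance (quadW X u) ℙ)) :
    ∀ u : InterIdx p → ℝ, l2 u = 1 →
      variance (fun ω => 2⁻¹ * quadW X u ω) ℙ ≤ lamMaxZ ℙ X / (1 - ρ) := by
  intro u hu
  have hZ := sum_mul_interVec_eq_linU_add_quadW X u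
  have hL : MemLp (linU X u) 2 ℙ := memLp_finsetSum _ fun i _ => (hL2 (Sum.inl i)).const_mul _
  have hZu : MemLp (fun ω => ∑ j, u j * interVec (X ω) j) 2 ℙ :=
    memLp_finsetSum _ fun j _ => (hL2 j).const_mul _
  have hQ : MemLp (fun ω => 2⁻¹ * quadW X u ω) 2 ℙ := by
    simpa [hZ] using hZu.sub hL
  rw [le_div_iff₀ (sub_pos.2 hρ)]
  calc Var[fun ω => 2⁻¹ * quadW X u ω; ℙ] * (1 - ρ)
      ≤ (1 - ρ) * (Var[linU X u; ℙ] + Var[fun ω => 2⁻¹ * quadW X u ω; ℙ]) := by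
        nlinarith [variance_nonneg (linU X u) ℙ]
    _ ≤ Var[linU X u + fun ω => 2⁻¹ * quadW X u ω; ℙ] :=
        one_sub_mul_add_le_variance_add hL hQ hρ0 (abs_covariance_const_mul_right_le (hA4 u hu) _)
    _ ≤ lamMaxZ ℙ X := hZ ▸ le_csSup hbdd ⟨u, hu, rfl⟩

/-- under (A4) and `λ_max(Σ_z) < ∞`, the variance of the quadratic part is
uniformly bounded: `Var((1/2) X^T W(u) X) ≤ λ_max(Σ_z)/(1 − ρ̄)` for all unit `u`. -/
theorem statement_14 {Ω : Type*} [MeasureSpace Ω] [IsProbabilityMeasure (ℙ : Measure Ω)]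
    {p : ℕ} (X : Ω → Fin p → ℝ) (hXm : Measurable X)
    (hcent : ∀ i, (∫ ω, X ω i ∂ℙ) = 0)
    (hL2 : ∀ j : InterIdx p, MemLp (fun ω => interVec (X ω) j) 2 ℙ)
    (hbdd : BddAbove ((fun u : InterIdx p → ℝ =>
      variance (fun ω => ∑ j, u j * interVec (X ω) j) ℙ) '' {u | l2 u = 1}))
    (ρ : ℝ) (hρ0 : 0 ≤ ρ) (hρ : ρ < 1)
    (hA4 : ∀ u : InterIdx p → ℝ, l2 u = 1 →
      |cova ℙ (linU X u) (quadW X u)| ≤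
        ρ * Real.sqrt (variance (linU X u) ℙ) * Real.sqrt (variance (quadW X u) ℙ)) :
    ∀ u : InterIdx p → ℝ, l2 u = 1 →
      variance (fun ω => 2⁻¹ * quadW X u ω) ℙ ≤ lamMaxZ ℙ X / (1 - ρ) :=
  statement_14_general X hL2 hbdd ρ hρ0 hρ hA4
end
end
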